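/- arXiv:1402.7327 — 5 statements merged into one kernel-verified Lean document; each statement's English description precedes it below -/
import Mathlib

section
/- Let (X,T) be a topological dynamical system. For each ε > 0 and each j ∈ ℕ, the set E^m_ε := {x ∈ X : ∃ δ > 0, ∀ y,z ∈ B_δ(x), D_({i : d(Tⁱy,Tⁱz) ≤ ε}) ≥ 1 - ε} is inversely invariant, i.e. T^{-j}(E^m_ε) ⊆ E^m_ε. -/
open Filter Metric Set
open scoped Classical

noncomputable def lowerDensity (S : Set ℕ) : ℝ :=
  Filter.atTop.liminf (fun n => (((Finset.range (n + 1)).filter (fun i => i ∈ S)).card : ℝ) / (n + 1))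

noncomputable def upperDensity (S : Set ℕ) : ℝ :=
  Filter.atTop.limsup (fun n => (((Finset.range (n + 1)).filter (fun i => i ∈ S)).card : ℝ) / (n + 1))

/-!
Shifting a set of times by `j` changes each partial count `#(S ∩ [0, n])` by at most `j`, an
error that vanishes after dividing by `n + 1`; hence the lower density of `{i | i + j ∈ S}` is at
most that of `S`. If `T^j x` lies in `E^m_ε` with radius `δ`, continuity of `T^j` gives a radius
`δ'` with `T^j (B_δ'(x)) ⊆ B_δ(T^j x)`, and for `y, z ∈ B_δ'(x)` the set of `ε`-close times of
`T^j y, T^j z` is exactly the `j`-shift of that of `y, z`.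
-/

open Topology

noncomputable def partialDensity (S : Set ℕ) (n : ℕ) : ℝ :=
  (((Finset.range (n + 1)).filter (fun i => i ∈ S)).card : ℝ) / (n + 1)

lemma lowerDensity_eq_liminf_partialDensity (S : Set ℕ) :
    lowerDensity S = atTop.liminf (partialDensity S) :=
  rfl

lemma partialDensity_nonneg (S : Set ℕ) (n : ℕ) : 0 ≤ partialDensity S n := by
  unfold partialDensity; positivity

lemma partialDensity_le_one (S : Set ℕ) (n : ℕ) : partialDensity S n ≤ 1 := by
  rw [partialDensity, div_le_one (by positivity)]
  exact_mod_cast (Finset.card_filter_le _ _).trans (Finset.card_range (n + 1)).le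

lemma card_filter_range_shift_le (S : Set ℕ) (j n : ℕ) :
    ((Finset.range (n + 1)).filter (fun i => i + j ∈ S)).card ≤
      ((Finset.range (n + j + 1)).filter (fun i => i ∈ S)).card := by
  refine Finset.card_le_card_of_injOn (· + j) (fun i hi => ?_) (add_left_injective j).injOn
  simp only [Finset.coe_filter, Finset.mem_range, mem_ofPred_eq] at hi ⊢
  exact ⟨by omega, hi.2⟩

lemma partialDensity_shift_le (S : Set ℕ) (j n : ℕ) :
    partialDensity {i | i + j ∈ S} n ≤ j / (n + 1) + partialDensity S (n + j) := by
  set c : ℕ := ((Finset.range (n + j + 1)).filter (fun i => i ∈ S)).card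
  have hc : (c : ℝ) ≤ n + j + 1 := by
    exact_mod_cast (Finset.card_filter_le _ _).trans (Finset.card_range (n + j + 1)).le
  have hpos : (0 : ℝ) < n + 1 := by positivity
  calc partialDensity {i | i + j ∈ S} n ≤ c / (n + 1) := by
        unfold partialDensity
        gcongr
        exact_mod_cast card_filter_range_shift_le S j n
    _ ≤ j / (n + 1) + c / (n + j + 1) := by
        rw [div_add_div _ _ hpos.ne' (by positivity), div_le_div_iff₀ hpos (by positivity)]
        nlinarith [mul_le_mul_of_nonneg_right hc (by positivity : (0 : ℝ) ≤ (n + 1) * j)]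
    _ = j / (n + 1) + partialDensity S (n + j) := by
        simp only [partialDensity, c]; push_cast; ring_nf

lemma lowerDensity_shift_le (S : Set ℕ) (j : ℕ) :
    lowerDensity {i | i + j ∈ S} ≤ lowerDensity S := by
  have hbdd_below (S' : Set ℕ) (k : ℕ) :
      atTop.IsBoundedUnder (· ≥ ·) fun n => partialDensity S' (n + k) :=
    isBoundedUnder_of ⟨0, fun _ => partialDensity_nonneg _ _⟩
  have hbdd_above : atTop.IsBoundedUnder (· ≤ ·) fun n => partialDensity S (n + j) :=
    isBoundedUnder_of ⟨1, fun _ => partialDensity_le_one _ _⟩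
  have herr : Tendsto (fun n : ℕ => (j : ℝ) / (n + 1)) atTop (𝓝 0) :=
    (tendsto_add_atTop_iff_nat 1).2 (tendsto_const_div_atTop_nhds_zero_nat (j : ℝ)) |>.congr
      fun n => by push_cast; rfl
  rw [lowerDensity_eq_liminf_partialDensity, lowerDensity_eq_liminf_partialDensity,
    ← liminf_nat_add (partialDensity S) j]
  calc atTop.liminf (partialDensity {i | i + j ∈ S})
      ≤ atTop.liminf ((fun n : ℕ => (j : ℝ) / (n + 1)) + fun n => partialDensity S (n + j)) :=
        liminf_le_liminf (.of_forall (partialDensity_shift_le S j)) (hbdd_below _ 0)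
          (isBoundedUnder_le_add herr.isBoundedUnder_le hbdd_above).isCoboundedUnder_ge
    _ ≤ atTop.limsup (fun n : ℕ => (j : ℝ) / (n + 1)) +
          atTop.liminf (fun n => partialDensity S (n + j)) :=
        liminf_add_le herr.isBoundedUnder_ge herr.isBoundedUnder_le (hbdd_below S j)
          hbdd_above.isCoboundedUnder_ge
    _ = atTop.liminf (fun n => partialDensity S (n + j)) := by
        rw [herr.limsup_eq, zero_add]

theorem Em_eps_inv_invariant_general {X : Type*} [MetricSpace X]
    (T : X → X) (hT : Continuous T) (ε : ℝ) (j : ℕ) :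
    (T^[j]) ⁻¹' {x : X | ∃ δ > 0, ∀ y ∈ Metric.closedBall x δ, ∀ z ∈ Metric.closedBall x δ,
        1 - ε ≤ lowerDensity {i : ℕ | dist (T^[i] y) (T^[i] z) ≤ ε}} ⊆
      {x : X | ∃ δ > 0, ∀ y ∈ Metric.closedBall x δ, ∀ z ∈ Metric.closedBall x δ,
        1 - ε ≤ lowerDensity {i : ℕ | dist (T^[i] y) (T^[i] z) ≤ ε}} := by
  rintro x ⟨δ, hδ, hclose⟩
  have hnhds : T^[j] ⁻¹' closedBall (T^[j] x) δ ∈ 𝓝 x :=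
    (hT.iterate j).continuousAt.preimage_mem_nhds (closedBall_mem_nhds _ hδ)
  obtain ⟨δ', hδ', hball⟩ := nhds_basis_closedBall.mem_iff.mp hnhds
  refine ⟨δ', hδ', fun y hy z hz => (hclose _ (hball hy) _ (hball hz)).trans ?_⟩
  simpa only [mem_ofPred_eq, Function.iterate_add_apply] using
    lowerDensity_shift_le {i | dist (T^[i] y) (T^[i] z) ≤ ε} j

theorem Em_eps_inv_invariant {X : Type*} [MetricSpace X] [CompactSpace X]
    (T : X → X) (hT : Continuous T) (ε : ℝ) (hε : 0 < ε) (j : ℕ) :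
    (T^[j]) ⁻¹' {x : X | ∃ δ > 0, ∀ y ∈ Metric.closedBall x δ, ∀ z ∈ Metric.closedBall x δ,
        1 - ε ≤ lowerDensity {i : ℕ | dist (T^[i] y) (T^[i] z) ≤ ε}} ⊆
      {x : X | ∃ δ > 0, ∀ y ∈ Metric.closedBall x δ, ∀ z ∈ Metric.closedBall x δ,
        1 - ε ≤ lowerDensity {i : ℕ | dist (T^[i] y) (T^[i] z) ≤ ε}} :=
  Em_eps_inv_invariant_general T hT ε j
end

section
/- If (X,T) is a transitive topological dynamical system that is not almost mean equicontinuous (i.e. the set of mean equicontinuity points is not residual), then (X,T) is mean sensitive. -/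
open Filter Metric Set
open scoped Classical

/-!
If `(X,T)` is not mean sensitive, then for every `c > 0` some non-empty open set `U`
has all pairs of its points `c`-separated only on a set of times of upper density at most `c`.
Upper density is invariant under shifting time, so this property passes to `T^{-i} U`; by
transitivity these preimages meet every non-empty open set, hence the union of all open sets with
the property is open and dense. Intersecting over `c = 1/(m+1)` gives a residual set of mean
equicontinuity points.
-/

section UpperDensity

noncomputable def densityRatio (S : Set ℕ) (n : ℕ) : ℝ :=
  (((Finset.range (n + 1)).filter (fun i => i ∈ S)).card : ℝ) / (n + 1)

lemma densityRatio_nonneg (S : Set ℕ) (n : ℕ) : 0 ≤ densityRatio S n := by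
  unfold densityRatio; positivity

lemma densityRatio_le_one (S : Set ℕ) (n : ℕ) : densityRatio S n ≤ 1 := by
  rw [densityRatio, div_le_one (by positivity)]
  exact_mod_cast (Finset.card_filter_le _ _).trans (Finset.card_range (n + 1)).le

lemma isBoundedUnder_le_densityRatio (S : Set ℕ) :
    IsBoundedUnder (· ≤ ·) atTop (densityRatio S) :=
  isBoundedUnder_of ⟨1, densityRatio_le_one S⟩

lemma isBoundedUnder_ge_densityRatio (S : Set ℕ) :
    IsBoundedUnder (· ≥ ·) atTop (densityRatio S) :=
  isBoundedUnder_of ⟨0, densityRatio_nonneg S⟩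

lemma upperDensity_mono {S S' : Set ℕ} (h : S ⊆ S') : upperDensity S ≤ upperDensity S' := by
  refine limsup_le_limsup (Eventually.of_forall fun n => ?_)
    (isBoundedUnder_ge_densityRatio S).isCoboundedUnder_le (isBoundedUnder_le_densityRatio S')
  dsimp only
  gcongr

lemma densityRatio_le_add_densityRatio_preimage_add (S : Set ℕ) (k n : ℕ) :
    densityRatio S n ≤ k / (n + 1) + densityRatio ((· + k) ⁻¹' S) n := by
  have hsub : (Finset.range (n + 1)).filter (· ∈ S) ⊆
      Finset.range k ∪ ((Finset.range (n + 1)).filter (· ∈ (· + k) ⁻¹' S)).image (· + k) := by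
    intro i hi
    simp only [Finset.mem_filter, Finset.mem_range] at hi
    by_cases hik : i < k
    · exact Finset.mem_union_left _ (Finset.mem_range.2 hik)
    · refine Finset.mem_union_right _ (Finset.mem_image.2 ⟨i - k, ?_, by omega⟩)
      simp only [Finset.mem_filter, Finset.mem_range, mem_preimage, Nat.sub_add_cancel
        (not_lt.1 hik)]
      exact ⟨by omega, hi.2⟩
  have hcard : ((Finset.range (n + 1)).filter (· ∈ S)).card ≤
      k + ((Finset.range (n + 1)).filter (· ∈ (· + k) ⁻¹' S)).card :=
    calc _ ≤ _ := Finset.card_le_card hsub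
      _ ≤ _ := Finset.card_union_le _ _
      _ ≤ _ := by rw [Finset.card_range]; exact Nat.add_le_add_left Finset.card_image_le k
  rw [densityRatio, densityRatio, ← add_div, div_le_div_iff_of_pos_right (by positivity)]
  exact_mod_cast hcard

lemma upperDensity_le_upperDensity_preimage_add (S : Set ℕ) (k : ℕ) :
    upperDensity S ≤ upperDensity ((· + k) ⁻¹' S) := by
  have hk : Tendsto (fun n : ℕ => (k : ℝ) / (n + 1)) atTop (nhds 0) := by
    simpa [div_eq_mul_inv] using tendsto_one_div_add_atTop_nhds_zero_nat.const_mul (k : ℝ)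
  calc upperDensity S
      ≤ limsup ((fun n : ℕ => (k : ℝ) / (n + 1)) + densityRatio ((· + k) ⁻¹' S)) atTop :=
        limsup_le_limsup (Eventually.of_forall (densityRatio_le_add_densityRatio_preimage_add S k))
          (isBoundedUnder_ge_densityRatio S).isCoboundedUnder_le
          (isBoundedUnder_le_add hk.isBoundedUnder_le (isBoundedUnder_le_densityRatio _))
    _ ≤ limsup (fun n : ℕ => (k : ℝ) / (n + 1)) atTop + upperDensity ((· + k) ⁻¹' S) :=
        limsup_add_le hk.isBoundedUnder_ge hk.isBoundedUnder_le
          (isBoundedUnder_ge_densityRatio _).isCoboundedUnder_le (isBoundedUnder_le_densityRatio _)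
    _ = upperDensity ((· + k) ⁻¹' S) := by rw [hk.limsup_eq, zero_add]

end UpperDensity

section MeanEquicontinuity

variable {X : Type*} [MetricSpace X] (T : X → X)

def separationTimes (c : ℝ) (x y : X) : Set ℕ := {i | c < dist (T^[i] x) (T^[i] y)}

def MeanEquicontinuousAt (x : X) : Prop :=
  ∀ ε > 0, ∃ δ > 0, ∀ y ∈ closedBall x δ, upperDensity (separationTimes T ε x y) < ε

def IsMeanStable (c : ℝ) (U : Set X) : Prop :=
  ∀ x ∈ U, ∀ y ∈ U, upperDensity (separationTimes T c x y) ≤ c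

def meanStableSet (c : ℝ) : Set X := ⋃₀ {U | IsOpen U ∧ IsMeanStable T c U}

lemma isOpen_meanStableSet (c : ℝ) : IsOpen (meanStableSet T c) :=
  isOpen_sUnion fun _ hU => hU.1

variable {T}

lemma separationTimes_antitone {c c' : ℝ} (h : c ≤ c') (x y : X) :
    separationTimes T c' x y ⊆ separationTimes T c x y :=
  fun _ hi => h.trans_lt hi

lemma separationTimes_iterate (c : ℝ) (x y : X) (k : ℕ) :
    separationTimes T c (T^[k] x) (T^[k] y) = (· + k) ⁻¹' separationTimes T c x y := by
  ext i
  simp only [separationTimes, mem_ofPred_eq, mem_preimage, Function.iterate_add_apply]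

lemma IsMeanStable.mono {c : ℝ} {U V : Set X} (hU : IsMeanStable T c U) (hVU : V ⊆ U) :
    IsMeanStable T c V :=
  fun x hx y hy => hU x (hVU hx) y (hVU hy)

lemma IsMeanStable.preimage_iterate {c : ℝ} {U : Set X} (hU : IsMeanStable T c U) (k : ℕ) :
    IsMeanStable T c (T^[k] ⁻¹' U) := fun x hx y hy =>
  calc upperDensity (separationTimes T c x y)
      ≤ upperDensity (separationTimes T c (T^[k] x) (T^[k] y)) := by
        rw [separationTimes_iterate]; exact upperDensity_le_upperDensity_preimage_add _ k
    _ ≤ c := hU _ hx _ hy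

lemma dense_meanStableSet (hT : Continuous T) {c : ℝ} {U : Set X} (hUo : IsOpen U)
    (hU : IsMeanStable T c U)
    (hhit : ∀ V : Set X, IsOpen V → V.Nonempty → ∃ i : ℕ, ((T^[i]) '' V ∩ U).Nonempty) :
    Dense (meanStableSet T c) := by
  refine dense_iff_inter_open.2 fun V hVo hVne => ?_
  obtain ⟨i, _, ⟨w, hwV, rfl⟩, hwU⟩ := hhit V hVo hVne
  refine ⟨w, hwV, V ∩ T^[i] ⁻¹' U, ⟨?_, ?_⟩, hwV, hwU⟩
  · exact hVo.inter (hUo.preimage (hT.iterate i))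
  · exact (hU.preimage_iterate i).mono inter_subset_right

lemma meanEquicontinuousAt_of_forall_mem_meanStableSet {x : X}
    (hx : ∀ m : ℕ, x ∈ meanStableSet T (1 / (m + 1))) : MeanEquicontinuousAt T x := by
  intro ε hε
  obtain ⟨m, hm⟩ := exists_nat_one_div_lt hε
  obtain ⟨U, ⟨hUo, hU⟩, hxU⟩ := hx m
  obtain ⟨δ, hδ, hδU⟩ := nhds_basis_closedBall.mem_iff.1 (hUo.mem_nhds hxU)
  refine ⟨δ, hδ, fun y hy => ?_⟩
  calc upperDensity (separationTimes T ε x y)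
      ≤ upperDensity (separationTimes T (1 / (m + 1)) x y) :=
        upperDensity_mono (separationTimes_antitone hm.le x y)
    _ ≤ 1 / (m + 1) := hU x hxU y (hδU hy)
    _ < ε := hm

end MeanEquicontinuity

theorem transitive_not_almost_meanEq_meanSensitive_general {X : Type*} [MetricSpace X]
    (T : X → X) (hT : Continuous T)
    (htrans : ∀ U V : Set X, IsOpen U → U.Nonempty → IsOpen V → V.Nonempty →
      ∃ i : ℕ, ((T^[i]) '' U ∩ V).Nonempty)
    (hnae : ¬ ({x : X | ∀ ε > 0, ∃ δ > 0, ∀ y ∈ Metric.closedBall x δ,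
        upperDensity {i : ℕ | ε < dist (T^[i] x) (T^[i] y)} < ε} ∈ residual X)) :
    ∃ ε > 0, ∀ U : Set X, IsOpen U → U.Nonempty → ∃ x ∈ U, ∃ y ∈ U,
      ε < upperDensity {i : ℕ | ε < dist (T^[i] x) (T^[i] y)} := by
  by_contra hns
  push Not at hns
  refine hnae ?_
  have hdense : ∀ c > 0, Dense (meanStableSet T c) := fun c hc => by
    obtain ⟨U, hUo, hUne, hU⟩ := hns c hc
    exact dense_meanStableSet hT hUo hU fun V hVo hVne => htrans V U hVo hVne hUo hUne
  have hres : ∀ᶠ x in residual X, ∀ m : ℕ, x ∈ meanStableSet T (1 / (m + 1)) :=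
    eventually_countable_forall.2 fun m =>
      residual_of_dense_open (isOpen_meanStableSet T _) (hdense _ Nat.one_div_pos_of_nat)
  filter_upwards [hres] with x hx
  exact meanEquicontinuousAt_of_forall_mem_meanStableSet hx

theorem transitive_not_almost_meanEq_meanSensitive {X : Type*} [MetricSpace X] [CompactSpace X]
    (T : X → X) (hT : Continuous T)
    (htrans : ∀ U V : Set X, IsOpen U → U.Nonempty → IsOpen V → V.Nonempty →
      ∃ i : ℕ, ((T^[i]) '' U ∩ V).Nonempty)
    (hnae : ¬ ({x : X | ∀ ε > 0, ∃ δ > 0, ∀ y ∈ Metric.closedBall x δ,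
        upperDensity {i : ℕ | ε < dist (T^[i] x) (T^[i] y)} < ε} ∈ residual X)) :
    ∃ ε > 0, ∀ U : Set X, IsOpen U → U.Nonempty → ∃ x ∈ U, ∃ y ∈ U,
      ε < upperDensity {i : ℕ | ε < dist (T^[i] x) (T^[i] y)} :=
  transitive_not_almost_meanEq_meanSensitive_general T hT htrans hnae
end

section
/- Let (X,μ,T) be an ergodic topological dynamical system. If (X,T) is μ-mean expansive, i.e. there exists ε > 0 with (μ × μ){(x,y) : d_b(x,y) > ε} = 1, then (X,T) is μ-mean sensitive: for every Borel set A with μ(A) > 0 there exist x,y ∈ A with d_b(x,y) > ε. -/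
open Filter Metric Set
open scoped Classical

noncomputable def besicovitch {X : Type*} [MetricSpace X] (T : X → X) (x y : X) : ℝ :=
  sInf {δ : ℝ | 0 < δ ∧ upperDensity {i : ℕ | δ < dist (T^[i] x) (T^[i] y)} < δ}

open MeasureTheory

theorem meanExpansive_meanSensitive {X : Type*} [MetricSpace X] [CompactSpace X]
    [MeasurableSpace X] [BorelSpace X]
    (T : X → X) (hT : Continuous T) (μ : Measure X) [IsProbabilityMeasure μ]
    (hErg : Ergodic T μ) (ε : ℝ) (hε : 0 < ε)
    (hexp : (μ.prod μ) {p : X × X | ε < besicovitch T p.1 p.2} = 1) :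
    ∀ A : Set X, MeasurableSet A → 0 < μ A →
      ∃ x ∈ A, ∃ y ∈ A, ε < besicovitch T x y := by
  intro A hA hApos
  by_contra h
  push_neg at h
  have hsub : {p : X × X | ε < besicovitch T p.1 p.2} ⊆ (A ×ˢ A)ᶜ := by
    rintro ⟨x, y⟩ hp ⟨hx, hy⟩
    exact absurd hp (not_lt.2 (h x hx y hy))
  have h1 : (μ.prod μ) {p : X × X | ε < besicovitch T p.1 p.2} ≤ (μ.prod μ) (A ×ˢ A)ᶜ :=
    measure_mono hsub
  rw [hexp, measure_compl (hA.prod hA) (measure_ne_top _ _)] at h1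
  have hm : (μ.prod μ) (A ×ˢ A) = μ A * μ A := Measure.prod_prod A A
  have hle : (μ.prod μ) (A ×ˢ A) ≤ 1 := prob_le_one
  have huniv : (μ.prod μ) Set.univ = 1 := measure_univ
  rw [huniv] at h1
  have h2 : (1 : ENNReal) + (μ.prod μ) (A ×ˢ A) ≤ 1 := by
    calc (1 : ENNReal) + (μ.prod μ) (A ×ˢ A)
        ≤ (1 - (μ.prod μ) (A ×ˢ A)) + (μ.prod μ) (A ×ˢ A) := by gcongr
      _ = 1 := tsub_add_cancel_of_le hle
  have h3 : (μ.prod μ) (A ×ˢ A) = 0 := by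
    have := (ENNReal.add_le_add_iff_left (by norm_num)).mp
      (by simpa using h2 : (1 : ENNReal) + (μ.prod μ) (A ×ˢ A) ≤ 1 + 0)
    simpa using this
  rw [hm] at h3
  exact absurd h3 (ENNReal.mul_pos hApos.ne' hApos.ne').ne'
end

section
/- Let (X,T) be a topological dynamical system. For each ε > 0, the set E^w_ε := {x ∈ X : ∃ δ > 0 such that D_({i ∈ ℕ : diam(Tⁱ(B_δ(x))) ≤ ε}) ≥ 1 - ε} is open and inversely invariant (T^{-1}(E^w_ε) ⊆ E^w_ε). -/
open Filter Metric Set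
open scoped Classical

/-! Call `i` a good time for a ball `B` if `diam (T^[i] '' B) ≤ ε`. Near a point `x` with
`T x ∈ E^w_ε`, a small ball is mapped by `T` into the ball witnessing `T x ∈ E^w_ε`, so every good
time `i` of the latter is a good time `i + 1` of the former; with the good time `0` of a ball of
radius `≤ ε / 2`, this shift does not lower the lower density. Openness holds because a smaller
ball around a nearby point sits inside the witnessing ball. Compactness makes all images bounded,
so that `diam` is monotone on them. -/

lemma lowerDensity_le_of_card_le {S S' : Set ℕ}
    (h : ∀ n : ℕ, ((Finset.range (n + 1)).filter (· ∈ S)).card ≤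
      ((Finset.range (n + 1)).filter (· ∈ S')).card) :
    lowerDensity S ≤ lowerDensity S' := by
  have ratio_le_one : ∀ n : ℕ,
      (((Finset.range (n + 1)).filter (· ∈ S')).card : ℝ) / (n + 1) ≤ 1 := fun n => by
    rw [div_le_one (by positivity)]
    exact_mod_cast (Finset.card_filter_le _ _).trans (Finset.card_range (n + 1)).le
  refine liminf_le_liminf (Eventually.of_forall fun n => ?_) (isBoundedUnder_of ⟨0, fun n => ?_⟩)
    (isBoundedUnder_of ⟨1, ratio_le_one⟩).isCoboundedUnder_ge
  · exact div_le_div_of_nonneg_right (by exact_mod_cast h n) (by positivity)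
  · positivity

lemma lowerDensity_mono {S S' : Set ℕ} (h : S ⊆ S') : lowerDensity S ≤ lowerDensity S' :=
  lowerDensity_le_of_card_le fun _ =>
    Finset.card_le_card (Finset.monotone_filter_right _ fun _ _ hi => h hi)

lemma lowerDensity_le_of_zero_mem_of_succ_mem {S S' : Set ℕ} (h0 : 0 ∈ S')
    (hsucc : ∀ i ∈ S, i + 1 ∈ S') : lowerDensity S ≤ lowerDensity S' := by
  refine lowerDensity_le_of_card_le fun n => ?_
  simp only [Finset.card_filter]
  rw [Finset.sum_range_succ, Finset.sum_range_succ', if_pos h0]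
  gcongr with i
  · split_ifs with hi hi' <;> simp_all
  · split_ifs <;> simp

section CompactSpace

variable {X : Type*} [MetricSpace X] [CompactSpace X]

lemma diam_iterate_image_mono (T : X → X) (i : ℕ) {s t : Set X} (h : s ⊆ t) :
    diam (T^[i] '' s) ≤ diam (T^[i] '' t) :=
  diam_mono (image_mono h) (Bornology.IsBounded.all _)

lemma diam_iterate_succ_image_le (T : X → X) (i : ℕ) {s t : Set X} (h : MapsTo T s t) :
    diam (T^[i + 1] '' s) ≤ diam (T^[i] '' t) := by
  rw [Function.iterate_succ, image_comp]
  exact diam_iterate_image_mono T i h.image_subset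

end CompactSpace

theorem Ew_eps_open_and_inv_invariant {X : Type*} [MetricSpace X] [CompactSpace X]
    (T : X → X) (hT : Continuous T) (ε : ℝ) (hε : 0 < ε) :
    IsOpen {x : X | ∃ δ > 0,
        1 - ε ≤ lowerDensity {i : ℕ | Metric.diam ((T^[i]) '' Metric.closedBall x δ) ≤ ε}} ∧
    T ⁻¹' {x : X | ∃ δ > 0,
        1 - ε ≤ lowerDensity {i : ℕ | Metric.diam ((T^[i]) '' Metric.closedBall x δ) ≤ ε}} ⊆
      {x : X | ∃ δ > 0,
        1 - ε ≤ lowerDensity {i : ℕ | Metric.diam ((T^[i]) '' Metric.closedBall x δ) ≤ ε}} := by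
  constructor
  · refine Metric.isOpen_iff.mpr fun x ⟨δ, hδ, hx⟩ => ⟨δ / 2, half_pos hδ, fun y hy => ?_⟩
    have hball : closedBall y (δ / 2) ⊆ closedBall x δ :=
      closedBall_subset_closedBall' (by linarith [mem_ball.mp hy])
    exact ⟨δ / 2, half_pos hδ, hx.trans (lowerDensity_mono fun i hi =>
      (diam_iterate_image_mono T i hball).trans hi)⟩
  · rintro x ⟨δ, hδ, hx⟩
    obtain ⟨δ₀, hδ₀, hcont⟩ := Metric.continuous_iff.mp hT x δ hδ
    set r := min (δ₀ / 2) (ε / 2)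
    have hmaps : MapsTo T (closedBall x r) (closedBall (T x) δ) := fun z hz =>
      (hcont z ((mem_closedBall.mp hz).trans_lt (by grind))).le
    refine ⟨r, by positivity, hx.trans (lowerDensity_le_of_zero_mem_of_succ_mem ?_
      fun i hi => (diam_iterate_succ_image_le T i hmaps).trans hi)⟩
    rw [mem_ofPred_eq, Function.iterate_zero, image_id]
    linarith [diam_closedBall (x := x) (by positivity : 0 ≤ r), min_le_right (δ₀ / 2) (ε / 2)]
end

section
/- Let K be a finite set, ε > 0, and h : K → 𝒫(ℕ) a function such that the lower density of h(k) exceeds ε for every k ∈ K. Then there exist K' ⊆ K with |K'| ≥ ε|K|/2 and an index i ∈ ℕ such that i ∈ h(k) for every k ∈ K'. -/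
open Filter Metric Set
open scoped Classical

theorem finite_common_index {α : Type*} (K : Finset α) (ε : ℝ) (hε : 0 < ε)
    (h : α → Set ℕ) (hh : ∀ k ∈ K, ε < lowerDensity (h k)) :
    ∃ K' ⊆ K, ε * K.card / 2 ≤ (K'.card : ℝ) ∧ ∃ i : ℕ, ∀ k ∈ K', i ∈ h k := by
  rcases K.eq_empty_or_nonempty with rfl | hK
  · exact ⟨∅, by simp, by simp, 0, by simp⟩
  have hev : ∀ k ∈ K, ∀ᶠ n in atTop,
      ε < (((Finset.range (n + 1)).filter (fun i => i ∈ h k)).card : ℝ) / (n + 1) := by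
    intro k hk
    refine Filter.eventually_lt_of_lt_liminf (hh k hk) ?_
    refine Filter.isBoundedUnder_of ⟨0, fun n => ?_⟩
    have h2 : (0:ℝ) < (n:ℝ) + 1 := by positivity
    exact div_nonneg (by positivity) h2.le
  obtain ⟨n, hn⟩ := ((Filter.eventually_all_finset K).2 hev).exists
  -- for each k ∈ K, count exceeds ε * (n+1)
  have hcount : ∀ k ∈ K, ε * (n + 1) <
      (((Finset.range (n + 1)).filter (fun i => i ∈ h k)).card : ℝ) := by
    intro k hk
    have h2 : (0:ℝ) < (n:ℝ) + 1 := by positivity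
    have := hn k hk
    rw [lt_div_iff₀ h2] at this
    linarith
  -- double counting
  have hswap : ∑ i ∈ Finset.range (n + 1), ((K.filter (fun k => i ∈ h k)).card : ℝ)
      = ∑ k ∈ K, (((Finset.range (n + 1)).filter (fun i => i ∈ h k)).card : ℝ) := by
    push_cast [Finset.card_filter]
    rw [Finset.sum_comm]
  have hlow : ε * (n + 1) * K.card < ∑ k ∈ K, (((Finset.range (n + 1)).filter (fun i => i ∈ h k)).card : ℝ) := by
    calc ε * (n + 1) * K.card = ∑ _k ∈ K, ε * (n + 1) := by
          rw [Finset.sum_const, nsmul_eq_mul]; ring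
      _ < _ := Finset.sum_lt_sum_of_nonempty hK hcount
  have key : ∃ i ∈ Finset.range (n + 1), ε * K.card ≤ ((K.filter (fun k => i ∈ h k)).card : ℝ) := by
    by_contra hc
    push_neg at hc
    have : ∑ i ∈ Finset.range (n + 1), ((K.filter (fun k => i ∈ h k)).card : ℝ)
        ≤ ∑ _i ∈ Finset.range (n + 1), ε * K.card := by
      apply Finset.sum_le_sum
      intro i hi
      exact (hc i hi).le
    rw [hswap, Finset.sum_const, nsmul_eq_mul, Finset.card_range] at this
    push_cast at this
    nlinarith [hlow]
  obtain ⟨i, _, hi⟩ := key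
  refine ⟨K.filter (fun k => i ∈ h k), Finset.filter_subset _ _, ?_, i, ?_⟩
  · have : (0:ℝ) ≤ ε * K.card := by positivity
    linarith
  · intro k hk
    exact (Finset.mem_filter.1 hk).2
end
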